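/- Let V be a left KG_x-module with annihilator I ⊴ KG_x. For m ∈ M_x, the following are equivalent: (i) m ⊗ v = 0 in M_x ⊗_{KG_x} V for all v ∈ V; (ii) ⟨n, m⟩ ∈ I for all n ∈ M_x. Consequently, the annihilator of the induced L_c(X)⋊S-module M_x ⊗_{KG_x} V is {b ∈ L_c(X)⋊S : ⟨n, b·m⟩ ∈ I for all n, m ∈ M_x}. -/

import Mathlib

/-! Write `r : L_x → X` for `[t] ↦ θ_t(x)`. For germs `a, b` one has `s*t ∈ G̃_x` (with `a = [s]`,
`b = [t]`) exactly when `r a = r b`, and then `δ_a · δ_{[s*t]} = δ_{[s s* t]} = δ_b`. Hence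
`δ_a · ⟨δ_a, m⟩` is the restriction of `m` to the fibre of `r` through `a`, and `m` is the sum
of finitely many such restrictions. So `m ⊗ v = Σ δ_a ⊗ ⟨δ_a, m⟩ v`, which vanishes when every
`⟨n, m⟩` annihilates `V`. Conversely `(m', v) ↦ ⟨n, m'⟩ v` is balanced, so it kills `m ⊗ v`.
The description of the annihilator is this equivalence applied to `b · m`. -/

/-- An inverse semigroup: a semigroup with an involution `star` such that
`a (star a) a = a`, `(star a) a (star a) = star a`, and idempotents commute. -/
class InverseSemigroup (S : Type*) extends Semigroup S, Star S where
  star_star : ∀ a : S, star (star a) = a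
  mul_star_mul : ∀ a : S, a * star a * a = a
  star_mul_star : ∀ a : S, star a * a * star a = star a
  star_mul : ∀ a b : S, star (a * b) = star b * star a
  idem_comm : ∀ e f : S, e * e = e → f * f = f → e * f = f * e

/-- The natural partial order on an inverse semigroup: `s ≤ t` iff `s = t e`
for some idempotent `e`. -/
def ISle {S : Type*} [InverseSemigroup S] (s t : S) : Prop :=
  ∃ e : S, e * e = e ∧ s = t * e

/-- An ample action of an inverse semigroup `S` on a topological space `X`:
a semigroup homomorphism `s ↦ θ s` into partial homeomorphisms between clopen
subsets of `X` (composition with largest domains encoded via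
`PartialEquiv.trans` and `EqOnSource`), with `θ (star s) = (θ s).symm`, whose
domains cover `X`.  (For an ample dynamical system, `X` is moreover assumed
locally compact, Hausdorff and totally disconnected.) -/
structure AmpleSystem (S X : Type*) [InverseSemigroup S] [TopologicalSpace X] where
  θ : S → PartialHomeomorph X X
  hom : ∀ s t : S, (θ (s * t)).toPartialEquiv.EqOnSource
    ((θ t).toPartialEquiv.trans (θ s).toPartialEquiv)
  star_eq : ∀ s : S, (θ (star s)).toPartialEquiv.EqOnSource (θ s).toPartialEquiv.symm
  clopen : ∀ s : S, IsClopen (θ s).source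
  cover : ∀ x : X, ∃ s : S, x ∈ (θ s).source

variable (K : Type*) [Field K]

/-- `L_c(X)`: the locally constant, compactly supported `K`-valued functions
on `X` (a non-unital commutative `K`-algebra under pointwise operations). -/
def LcSet (X : Type*) [TopologicalSpace X] : Set (X → K) :=
  {f | IsLocallyConstant f ∧ HasCompactSupport f}

variable {S X : Type*} [InverseSemigroup S] [TopologicalSpace X]

/-- The globally defined endomorphism `ᾱ_s` of `L_c(X)`:
`ᾱ_s(f) = α_s(f · 1_{X_{s*s}})`, i.e. `(ᾱ_s f)(x) = f (θ_{s*} x)` for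
`x ∈ X_{s s*}` and `0` otherwise. -/
noncomputable def barAlpha (T : AmpleSystem S X) (s : S) (f : X → K) : X → K :=
  (T.θ s).target.indicator (fun x => f ((T.θ s).symm x))

/-- The fiber `B_s = L_c(X_{s s*})` of the semi-direct product bundle:
elements of `L_c(X)` vanishing outside `X_{s s*} = ran θ_s`. -/
def FibSet (T : AmpleSystem S X) (s : S) : Set (X → K) :=
  {f | f ∈ LcSet K X ∧ ∀ x ∉ (T.θ s).target, f x = 0}

/-- `L_c(X_e)` for an idempotent `e`: elements of `L_c(X)` vanishing outside
`X_e = dom θ_e`. -/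
def LcE (T : AmpleSystem S X) (e : S) : Set (X → K) :=
  {f | f ∈ LcSet K X ∧ ∀ x ∉ (T.θ e).source, f x = 0}

/-- A covariant representation `(π, σ)` of an ample dynamical system
`(θ, S, X)` on a `K`-vector space `V`: a non-degenerate representation `π` of
`L_c(X)` and a semigroup homomorphism `σ : S → End(V)` with
`π (α_s f) = σ_s π(f) σ_{s*}` for `f ∈ L_c(X_{s*s})`, and
`span {π(f) ξ : f ∈ L_c(X_e)} = σ_e(V)` for each idempotent `e`.
(`π` is recorded as a map on all of `X → K`; only its values on `L_c(X)` are
constrained.) -/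
structure CovRep (T : AmpleSystem S X) (V : Type*) [AddCommGroup V]
    [Module K V] where
  π : (X → K) → Module.End K V
  σ : S → Module.End K V
  π_add : ∀ f ∈ LcSet K X, ∀ g ∈ LcSet K X, π (f + g) = π f + π g
  π_smul : ∀ (c : K), ∀ f ∈ LcSet K X, π (c • f) = c • π f
  π_mul : ∀ f ∈ LcSet K X, ∀ g ∈ LcSet K X, π (f * g) = π f * π g
  π_nondeg : Submodule.span K {ξ : V | ∃ f ∈ LcSet K X, ∃ η : V, ξ = π f η} = ⊤
  σ_hom : ∀ s t : S, σ (s * t) = σ s * σ t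
  covariant : ∀ s : S, ∀ f ∈ LcE K T (star s * s),
    π (barAlpha K T s f) = σ s * π f * σ (star s)
  essential : ∀ e : S, e * e = e →
    Submodule.span K {ξ : V | ∃ f ∈ LcE K T e, ∃ η : V, ξ = π f η} =
      LinearMap.range (σ e)

/-- The defining relations of the crossed product `L_c(X) ⋊ S`, imposed on the
free `K`-algebra on formal symbols `f δ_s` (`s ∈ S`, `f : X → K`): symbols with
`f ∉ L_c(X_{s s*})` are discarded, the symbols are `K`-linear in `f` on each
fiber, `(f δ_s)(g δ_t) = f ᾱ_s(g) δ_{s t}`, and `f δ_s = f δ_t` whenever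
`s ≤ t` and `f ∈ L_c(X_{s s*})`.  The quotient is precisely the universal
(cross-sectional) algebra of the semi-direct product bundle `B^θ`. -/
inductive CPRel {S X : Type*} [InverseSemigroup S] [TopologicalSpace X]
    (K : Type*) [Field K] (T : AmpleSystem S X) :
    FreeAlgebra K (S × (X → K)) → FreeAlgebra K (S × (X → K)) → Prop
  | zero (s : S) (f : X → K) : f ∉ FibSet K T s →
      CPRel K T (FreeAlgebra.ι K (s, f)) 0
  | add (s : S) (f g : X → K) : f ∈ FibSet K T s → g ∈ FibSet K T s →
      CPRel K T (FreeAlgebra.ι K (s, f + g))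
        (FreeAlgebra.ι K (s, f) + FreeAlgebra.ι K (s, g))
  | smul (s : S) (c : K) (f : X → K) : f ∈ FibSet K T s →
      CPRel K T (FreeAlgebra.ι K (s, c • f)) (c • FreeAlgebra.ι K (s, f))
  | mul (s t : S) (f g : X → K) : f ∈ FibSet K T s → g ∈ FibSet K T t →
      CPRel K T (FreeAlgebra.ι K (s, f) * FreeAlgebra.ι K (t, g))
        (FreeAlgebra.ι K (s * t, f * barAlpha K T s g))
  | incl (s t : S) (f : X → K) : ISle s t → f ∈ FibSet K T s →
      CPRel K T (FreeAlgebra.ι K (s, f)) (FreeAlgebra.ι K (t, f))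

/-- The crossed product algebra `L_c(X) ⋊ S` of an ample dynamical system. -/
abbrev CP {S X : Type*} [InverseSemigroup S] [TopologicalSpace X]
    (K : Type*) [Field K] (T : AmpleSystem S X) :=
  RingQuot (CPRel K T)

/-- The element `f Δ_s` of the crossed product `L_c(X) ⋊ S`. -/
noncomputable def Delta {S X : Type*} [InverseSemigroup S] [TopologicalSpace X]
    (K : Type*) [Field K] (T : AmpleSystem S X) (s : S) (f : X → K) :
    CP K T :=
  RingQuot.mkAlgHom K (CPRel K T) (FreeAlgebra.ι K (s, f))

section Germs

variable {S X : Type*} [InverseSemigroup S] [TopologicalSpace X]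

/-- Germ equivalence at `x`: `s ~ t` iff `s e = t e` for some idempotent `e`
whose domain contains `x`. -/
def GermRel (T : AmpleSystem S X) (x : X) (s t : S) : Prop :=
  ∃ e : S, e * e = e ∧ x ∈ (T.θ e).source ∧ s * e = t * e

/-- `L̃_x`: elements of `S` whose domain contains `x`. -/
def Lt (T : AmpleSystem S X) (x : X) : Type _ :=
  {s : S // x ∈ (T.θ s).source}

/-- `G̃_x`: elements of `S` whose domain contains `x` and which fix `x`. -/
def Gt (T : AmpleSystem S X) (x : X) : Type _ :=
  {s : S // x ∈ (T.θ s).source ∧ T.θ s x = x}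

/-- `L_x`: the set of germs at `x` of elements of `L̃_x`. -/
def Lx (T : AmpleSystem S X) (x : X) : Type _ :=
  Quot (fun a b : Lt T x => GermRel T x a.1 b.1)

/-- `G_x`: the isotropy group at `x`, as a quotient set of `G̃_x` by germ
equivalence. -/
def Gx (T : AmpleSystem S X) (x : X) : Type _ :=
  Quot (fun a b : Gt T x => GermRel T x a.1 b.1)

end Germs

section Germs2

variable {S X : Type*} [InverseSemigroup S] [TopologicalSpace X]

/-- Membership in `G̃_x` as a predicate on `S`. -/
def GtMem (T : AmpleSystem S X) (x : X) (s : S) : Prop :=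
  x ∈ (T.θ s).source ∧ T.θ s x = x

/-- The germ class in `L_x` of an element of `L̃_x`. -/
def mkL (T : AmpleSystem S X) (x : X) (a : Lt T x) : Lx T x := Quot.mk _ a

/-- The germ class in `G_x` of an element of `G̃_x`. -/
def mkG (T : AmpleSystem S X) (x : X) (a : Gt T x) : Gx T x := Quot.mk _ a

end Germs2

/-- `m ⊗ v = 0` in `M_x ⊗_{K G_x} V` for every `v ∈ V`, expressed through the
universal property of the balanced tensor product: every `K G_x`-balanced
`K`-bilinear map `β : M_x × V → W` vanishes on `(m, v)` for all `v`. -/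
def TensorZero {K S X : Type*} [Field K] [InverseSemigroup S]
    [TopologicalSpace X] (T : AmpleSystem S X) (x : X)
    {V : Type} [AddCommGroup V] [Module K V]
    (act : (Lx T x →₀ K) →ₗ[K] (Gx T x →₀ K) →ₗ[K] (Lx T x →₀ K))
    (actV : (Gx T x →₀ K) →ₗ[K] Module.End K V)
    (m : Lx T x →₀ K) : Prop :=
  ∀ (W : Type) (_ : AddCommGroup W) (_ : Module K W)
    (β : (Lx T x →₀ K) →ₗ[K] V →ₗ[K] W),
    (∀ (m' : Lx T x →₀ K) (a : Gx T x →₀ K) (v : V),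
      β (act m' a) v = β m' (actV a v)) →
    ∀ v : V, β m v = 0

namespace Finsupp

theorem sum_filter_fiber_eq_self {α ι M : Type*} [AddCommMonoid M] [DecidableEq ι]
    (f : α →₀ M) (g : α → ι) :
    ∑ i ∈ f.support.image g, f.filter (fun a => g a = i) = f := by
  ext a
  simp only [finsetSum_apply, filter_apply]
  rw [Finset.sum_ite_eq]
  split_ifs with h
  · rfl
  · exact (notMem_support_iff.1 fun ha => h (Finset.mem_image_of_mem g ha)).symm

end Finsupp

namespace InverseSemigroup

variable {S : Type*} [InverseSemigroup S]

theorem mul_star_idem (t : S) : t * star t * (t * star t) = t * star t := by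
  rw [← mul_assoc, mul_star_mul]

theorem star_mul_idem_mul_idem {f : S} (hf : f * f = f) (t : S) :
    star t * f * t * (star t * f * t) = star t * f * t := by
  have hcomm := idem_comm f (t * star t) hf (mul_star_idem t)
  calc star t * f * t * (star t * f * t)
      = star t * (f * (t * star t)) * f * t := by simp only [mul_assoc]
    _ = star t * t * star t * (f * f) * t := by rw [hcomm]; simp only [mul_assoc]
    _ = star t * f * t := by rw [star_mul_star, hf]

theorem mul_star_mul_idem_mul {f : S} (hf : f * f = f) (t : S) :
    t * (star t * f * t) = f * t := by
  have hcomm := idem_comm f (t * star t) hf (mul_star_idem t)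
  calc t * (star t * f * t) = (t * star t) * f * t := by simp only [mul_assoc]
    _ = f * (t * star t * t) := by rw [← hcomm]; simp only [mul_assoc]
    _ = f * t := by rw [mul_star_mul]

end InverseSemigroup

namespace AmpleSystem

variable {S X : Type*} [InverseSemigroup S] [TopologicalSpace X] (T : AmpleSystem S X)

theorem mem_source_mul {s t : S} {y : X} :
    y ∈ (T.θ (s * t)).source ↔ y ∈ (T.θ t).source ∧ T.θ t y ∈ (T.θ s).source := by
  rw [show (T.θ (s * t)).source = _ from (T.hom s t).1, PartialEquiv.trans_source]
  rfl

theorem apply_mul {s t : S} {y : X} (hy : y ∈ (T.θ (s * t)).source) :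
    T.θ (s * t) y = T.θ s (T.θ t y) :=
  (T.hom s t).2 hy

theorem source_star (s : S) : (T.θ (star s)).source = (T.θ s).target :=
  (T.star_eq s).1

theorem apply_star {s : S} {y : X} (hy : y ∈ (T.θ s).target) :
    T.θ (star s) y = (T.θ s).symm y :=
  (T.star_eq s).2 (by rwa [source_star])

theorem apply_of_idem {e : S} (he : e * e = e) {y : X} (hy : y ∈ (T.θ e).source) :
    T.θ e y = y := by
  have hy' : y ∈ (T.θ (e * e)).source := by rwa [he]
  have h := T.apply_mul hy'
  rw [he] at h
  exact ((T.θ e).injOn hy (T.mem_source_mul.1 hy').2 h).symm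

theorem gtMem_star_mul_iff {x : X} {s t : S} (hs : x ∈ (T.θ s).source)
    (ht : x ∈ (T.θ t).source) : GtMem T x (star s * t) ↔ T.θ s x = T.θ t x := by
  constructor
  · rintro ⟨hst, hfix⟩
    have htarget : T.θ t x ∈ (T.θ s).target := by
      rw [← source_star]; exact (T.mem_source_mul.1 hst).2
    rw [T.apply_mul hst, T.apply_star htarget] at hfix
    rw [← (T.θ s).right_inv htarget, hfix]
  · intro hst
    have htarget : T.θ t x ∈ (T.θ s).target := hst ▸ (T.θ s).map_source hs
    have hsrc : x ∈ (T.θ (star s * t)).source :=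
      T.mem_source_mul.2 ⟨ht, by rwa [source_star]⟩
    refine ⟨hsrc, ?_⟩
    rw [T.apply_mul hsrc, T.apply_star htarget, ← hst, (T.θ s).left_inv hs]

theorem germRel_idem_mul {x : X} {f t : S} (hf : f * f = f) (ht : x ∈ (T.θ t).source)
    (hft : T.θ t x ∈ (T.θ f).source) : GermRel T x (f * t) t := by
  refine ⟨star t * f * t, InverseSemigroup.star_mul_idem_mul_idem hf t, ?_, ?_⟩
  · refine T.mem_source_mul.2 ⟨ht, T.mem_source_mul.2 ⟨hft, ?_⟩⟩
    rw [T.apply_of_idem hf hft, source_star]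
    exact (T.θ t).map_source ht
  · rw [mul_assoc f t, InverseSemigroup.mul_star_mul_idem_mul hf, ← mul_assoc, hf]

end AmpleSystem

section GermPoint

variable {S X : Type*} [InverseSemigroup S] [TopologicalSpace X] (T : AmpleSystem S X) (x : X)

def germPoint : Lx T x → X :=
  Quot.lift (fun a : Lt T x => T.θ a.1 x) fun a b ⟨e, he, hx, hab⟩ => by
    have hfix := T.apply_of_idem he hx
    have hsrc (u : S) (hu : x ∈ (T.θ u).source) : x ∈ (T.θ (u * e)).source :=
      T.mem_source_mul.2 ⟨hx, hfix.symm ▸ hu⟩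
    have ha := T.apply_mul (hsrc a.1 a.2)
    have hb := T.apply_mul (hsrc b.1 b.2)
    rw [hfix] at ha hb
    rw [← ha, ← hb, hab]

end GermPoint

section InducedModule

variable {K S X : Type*} [Field K] [InverseSemigroup S] [TopologicalSpace X]
  (T : AmpleSystem S X) (x : X)

def IsGermPairing (p : (Lx T x →₀ K) →ₗ[K] (Lx T x →₀ K) →ₗ[K] (Gx T x →₀ K)) :
    Prop :=
  ∀ a b : Lt T x,
    (∀ h : GtMem T x (star a.1 * b.1),
      p (Finsupp.single (mkL T x a) 1) (Finsupp.single (mkL T x b) 1) =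
        Finsupp.single (mkG T x ⟨star a.1 * b.1, h⟩) 1) ∧
    (¬ GtMem T x (star a.1 * b.1) →
      p (Finsupp.single (mkL T x a) 1) (Finsupp.single (mkL T x b) 1) = 0)

def IsGermRightAction (act : (Lx T x →₀ K) →ₗ[K] (Gx T x →₀ K) →ₗ[K] (Lx T x →₀ K)) :
    Prop :=
  ∀ (a : Lt T x) (b : Gt T x) (h : x ∈ (T.θ (a.1 * b.1)).source),
    act (Finsupp.single (mkL T x a) 1) (Finsupp.single (mkG T x b) 1) =
      Finsupp.single (mkL T x (⟨a.1 * b.1, h⟩ : Lt T x)) 1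

variable {T x} {p : (Lx T x →₀ K) →ₗ[K] (Lx T x →₀ K) →ₗ[K] (Gx T x →₀ K)}
  {act : (Lx T x →₀ K) →ₗ[K] (Gx T x →₀ K) →ₗ[K] (Lx T x →₀ K)}
  {V : Type} [AddCommGroup V] [Module K V] {actV : (Gx T x →₀ K) →ₗ[K] Module.End K V}

theorem act_single_pair_single (hp : IsGermPairing T x p) (hact : IsGermRightAction T x act)
    [DecidableEq X] (a b : Lx T x) :
    act (Finsupp.single a 1) (p (Finsupp.single a 1) (Finsupp.single b 1)) =
      if germPoint T x b = germPoint T x a then Finsupp.single b 1 else 0 := by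
  induction a using Quot.ind with | mk a => ?_
  induction b using Quot.ind with | mk b => ?_
  change act (Finsupp.single (mkL T x a) 1)
      (p (Finsupp.single (mkL T x a) 1) (Finsupp.single (mkL T x b) 1)) =
    if T.θ b.1 x = T.θ a.1 x then Finsupp.single (mkL T x b) 1 else 0
  by_cases hab : T.θ b.1 x = T.θ a.1 x
  · have hQ : GtMem T x (star a.1 * b.1) := (T.gtMem_star_mul_iff a.2 b.2).2 hab.symm
    have hsrc : x ∈ (T.θ (a.1 * (star a.1 * b.1))).source :=
      T.mem_source_mul.2 ⟨hQ.1, hQ.2.symm ▸ a.2⟩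
    have hgerm : GermRel T x (a.1 * (star a.1 * b.1)) b.1 := by
      rw [← mul_assoc]
      refine T.germRel_idem_mul (InverseSemigroup.mul_star_idem a.1) b.2
        (T.mem_source_mul.2 ⟨(T.mem_source_mul.1 hQ.1).2, ?_⟩)
      rw [← T.apply_mul hQ.1, hQ.2]
      exact a.2
    rw [if_pos hab, (hp a b).1 hQ, hact a ⟨_, hQ⟩ hsrc]
    exact congrArg (Finsupp.single · 1) (Quot.sound hgerm)
  · rw [if_neg hab, (hp a b).2 fun hQ => hab ((T.gtMem_star_mul_iff a.2 b.2).1 hQ).symm,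
      map_zero]

theorem act_single_pair_eq_filter (hp : IsGermPairing T x p) (hact : IsGermRightAction T x act)
    [DecidableEq X] (a : Lx T x) (m : Lx T x →₀ K) :
    act (Finsupp.single a 1) (p (Finsupp.single a 1) m) =
      m.filter fun b => germPoint T x b = germPoint T x a := by
  induction m using Finsupp.induction_linear with
  | zero => rw [map_zero, map_zero, Finsupp.filter_zero]
  | add m n hm hn => rw [map_add, map_add, hm, hn, Finsupp.filter_add]
  | single b c =>
    rw [← Finsupp.smul_single_one b c, map_smul, map_smul, act_single_pair_single hp hact,
      Finsupp.filter_smul]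
    split_ifs with h
    · rw [Finsupp.filter_single_of_pos (fun b => germPoint T x b = germPoint T x a) h]
    · rw [Finsupp.filter_single_of_neg (fun b => germPoint T x b = germPoint T x a) h,
        smul_zero]

theorem tensorZero_of_forall_actV_pair_eq_zero
    (hp : IsGermPairing T x p) (hact : IsGermRightAction T x act) {m : Lx T x →₀ K}
    (hm : ∀ n, actV (p n m) = 0) : TensorZero T x act actV m := by
  classical
  intro W _ _ β hβ v
  rw [← Finsupp.sum_filter_fiber_eq_self m (germPoint T x), map_sum, LinearMap.sum_apply]
  refine Finset.sum_eq_zero fun y hy => ?_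
  obtain ⟨a, -, rfl⟩ := Finset.mem_image.1 hy
  rw [← act_single_pair_eq_filter hp hact, hβ, hm, LinearMap.zero_apply, map_zero]

theorem actV_pair_eq_zero_of_tensorZero
    {mG : (Gx T x →₀ K) →ₗ[K] (Gx T x →₀ K) →ₗ[K] (Gx T x →₀ K)}
    (hpbal : ∀ (m n : Lx T x →₀ K) (a : Gx T x →₀ K), p m (act n a) = mG (p m n) a)
    (hactV_mul : ∀ a b : Gx T x →₀ K, actV (mG a b) = actV a * actV b)
    {m : Lx T x →₀ K} (hm : TensorZero T x act actV m) (n : Lx T x →₀ K) :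
    actV (p n m) = 0 := by
  refine LinearMap.ext fun v => hm V inferInstance inferInstance (actV ∘ₗ p n) ?_ v
  intro m' a w
  rw [LinearMap.comp_apply, LinearMap.comp_apply, hpbal, hactV_mul, Module.End.mul_apply]

end InducedModule

theorem induced_module_annihilator_general
    {K S X : Type*} [Field K] [InverseSemigroup S] [TopologicalSpace X]
    (T : AmpleSystem S X) (x : X)
    -- the convolution product of K G_x
    (mG : (Gx T x →₀ K) →ₗ[K] (Gx T x →₀ K) →ₗ[K] (Gx T x →₀ K))
    -- the K G_x-valued pairing on M_x
    (p : (Lx T x →₀ K) →ₗ[K] (Lx T x →₀ K) →ₗ[K] (Gx T x →₀ K))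
    (hp : ∀ a b : Lt T x,
      (∀ h : GtMem T x (star a.1 * b.1),
        p (Finsupp.single (mkL T x a) 1) (Finsupp.single (mkL T x b) 1) =
          Finsupp.single (mkG T x ⟨star a.1 * b.1, h⟩) 1) ∧
      (¬ GtMem T x (star a.1 * b.1) →
        p (Finsupp.single (mkL T x a) 1) (Finsupp.single (mkL T x b) 1) = 0))
    -- the right K G_x-action on M_x
    (act : (Lx T x →₀ K) →ₗ[K] (Gx T x →₀ K) →ₗ[K] (Lx T x →₀ K))
    (hact : ∀ (a : Lt T x) (b : Gt T x) (h : x ∈ (T.θ (a.1 * b.1)).source),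
      act (Finsupp.single (mkL T x a) 1) (Finsupp.single (mkG T x b) 1) =
        Finsupp.single (mkL T x (⟨a.1 * b.1, h⟩ : Lt T x)) 1)
    (hpbal : ∀ (m n : Lx T x →₀ K) (a : Gx T x →₀ K),
      p m (act n a) = mG (p m n) a)
    -- the left L_c(X) ⋊ S-action on M_x
    (actL : CP K T →ₗ[K] Module.End K (Lx T x →₀ K))
    -- the left K G_x-module V
    {V : Type} [AddCommGroup V] [Module K V]
    (actV : (Gx T x →₀ K) →ₗ[K] Module.End K V)
    (hactV_mul : ∀ a b : Gx T x →₀ K, actV (mG a b) = actV a * actV b) :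
    (∀ m : Lx T x →₀ K,
      TensorZero T x act actV m ↔ ∀ n : Lx T x →₀ K, actV (p n m) = 0) ∧
    (∀ b : CP K T,
      (∀ m : Lx T x →₀ K, TensorZero T x act actV (actL b m)) ↔
      ∀ n m : Lx T x →₀ K, actV (p n (actL b m)) = 0) := by
  have key : ∀ m : Lx T x →₀ K,
      TensorZero T x act actV m ↔ ∀ n : Lx T x →₀ K, actV (p n m) = 0 := fun m =>
    ⟨actV_pair_eq_zero_of_tensorZero hpbal hactV_mul,
      tensorZero_of_forall_actV_pair_eq_zero hp hact⟩
  exact ⟨key, fun b => ⟨fun h n m => (key _).1 (h m) n, fun h m => (key _).2 (h · m)⟩⟩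

/-- Let `V` be a left `K G_x`-module (action `actV`, compatible
with the convolution product `mG` of `K G_x` and unital on idempotent germs)
with annihilator `I = {a : K G_x | a • V = 0}`.  The bimodule `M_x = L_x →₀ K`
carries the right `K G_x`-action `act`, the `K G_x`-valued pairing `p`
(satisfying `⟨m, n a⟩ = ⟨m, n⟩ a`), and the left `L_c(X) ⋊ S`-action `actL`.
Then for `m ∈ M_x` the following are equivalent: (i) `m ⊗ v = 0` in
`M_x ⊗_{K G_x} V` for all `v ∈ V`; (ii) `⟨n, m⟩ ∈ I` for all `n ∈ M_x`.
Consequently the annihilator of the induced module `M_x ⊗_{K G_x} V` in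
`L_c(X) ⋊ S` is `{b : ⟨n, b·m⟩ ∈ I for all n, m ∈ M_x}`. -/
theorem induced_module_annihilator
    {K S X : Type*} [Field K] [InverseSemigroup S] [TopologicalSpace X]
    (T : AmpleSystem S X) (x : X)
    -- the convolution product of K G_x
    (mG : (Gx T x →₀ K) →ₗ[K] (Gx T x →₀ K) →ₗ[K] (Gx T x →₀ K))
    (hmG : ∀ (a b : Gt T x)
      (h : x ∈ (T.θ (a.1 * b.1)).source ∧ T.θ (a.1 * b.1) x = x),
      mG (Finsupp.single (mkG T x a) 1) (Finsupp.single (mkG T x b) 1) =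
        Finsupp.single (mkG T x ⟨a.1 * b.1, h⟩) 1)
    -- the K G_x-valued pairing on M_x
    (p : (Lx T x →₀ K) →ₗ[K] (Lx T x →₀ K) →ₗ[K] (Gx T x →₀ K))
    (hp : ∀ a b : Lt T x,
      (∀ h : GtMem T x (star a.1 * b.1),
        p (Finsupp.single (mkL T x a) 1) (Finsupp.single (mkL T x b) 1) =
          Finsupp.single (mkG T x ⟨star a.1 * b.1, h⟩) 1) ∧
      (¬ GtMem T x (star a.1 * b.1) →
        p (Finsupp.single (mkL T x a) 1) (Finsupp.single (mkL T x b) 1) = 0))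
    -- the right K G_x-action on M_x
    (act : (Lx T x →₀ K) →ₗ[K] (Gx T x →₀ K) →ₗ[K] (Lx T x →₀ K))
    (hact : ∀ (a : Lt T x) (b : Gt T x) (h : x ∈ (T.θ (a.1 * b.1)).source),
      act (Finsupp.single (mkL T x a) 1) (Finsupp.single (mkG T x b) 1) =
        Finsupp.single (mkL T x (⟨a.1 * b.1, h⟩ : Lt T x)) 1)
    (hpbal : ∀ (m n : Lx T x →₀ K) (a : Gx T x →₀ K),
      p m (act n a) = mG (p m n) a)
    -- the left L_c(X) ⋊ S-action on M_x
    (actL : CP K T →ₗ[K] Module.End K (Lx T x →₀ K))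
    (hactL_mul : ∀ a b : CP K T, actL (a * b) = actL a * actL b)
    (hactL : ∀ (s : S), ∀ f ∈ FibSet K T s, ∀ t : Lt T x,
      (∀ h : x ∈ (T.θ (s * t.1)).source,
        actL (Delta K T s f) (Finsupp.single (mkL T x t) 1) =
          f (T.θ (s * t.1) x) •
            Finsupp.single (mkL T x (⟨s * t.1, h⟩ : Lt T x)) 1) ∧
      (x ∉ (T.θ (s * t.1)).source →
        actL (Delta K T s f) (Finsupp.single (mkL T x t) 1) = 0))
    -- the left K G_x-module V
    {V : Type} [AddCommGroup V] [Module K V]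
    (actV : (Gx T x →₀ K) →ₗ[K] Module.End K V)
    (hactV_mul : ∀ a b : Gx T x →₀ K, actV (mG a b) = actV a * actV b)
    (hactV_one : ∀ (e : S) (h : GtMem T x e), e * e = e →
      actV (Finsupp.single (mkG T x ⟨e, h⟩) 1) = 1) :
    (∀ m : Lx T x →₀ K,
      TensorZero T x act actV m ↔ ∀ n : Lx T x →₀ K, actV (p n m) = 0) ∧
    (∀ b : CP K T,
      (∀ m : Lx T x →₀ K, TensorZero T x act actV (actL b m)) ↔
      ∀ n m : Lx T x →₀ K, actV (p n (actL b m)) = 0) :=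
  induced_module_annihilator_general T x mG p hp act hact hpbal actL actV hactV_mul
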